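/- arXiv:1512.03300 — 5 statements merged into one kernel-verified Lean document; each statement's English description precedes it below -/
import Mathlib

section
/- Let f : ℝ^K → ℝ be continuously differentiable and concave on the unit simplex Δ_K, and let C_f be a curvature constant for f. Let (θ_ℓ) be the Frank–Wolfe iterates for f. Then for every ℓ ≥ 0, the iterate θ_ℓ has at most ℓ+1 nonzero coordinates (i.e., it lies on an (ℓ+1)-dimensional face of Δ_K) and satisfies max_{θ ∈ Δ_K} f(θ) − f(θ_ℓ) ≤ 4·C_f/(ℓ+3). -/
lemma fw_grad_ineq {K : ℕ} (f : (Fin K → ℝ) → ℝ) (g : (Fin K → ℝ) → Fin K → ℝ)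
    (hconc : ConcaveOn ℝ (stdSimplex ℝ (Fin K)) f)
    {θ θ' : Fin K → ℝ} (hθ : θ ∈ stdSimplex ℝ (Fin K)) (hθ' : θ' ∈ stdSimplex ℝ (Fin K))
    (hd : HasFDerivAt f
        (∑ i, g θ i • (ContinuousLinearMap.proj i : (Fin K → ℝ) →L[ℝ] ℝ)) θ) :
    f θ' - f θ ≤ ∑ k, (θ' k - θ k) * g θ k := by
  set L := (∑ i, g θ i • (ContinuousLinearMap.proj i : (Fin K → ℝ) →L[ℝ] ℝ))
  set v := θ' - θ with hv
  have hline : ∀ a : ℝ, θ + a • v = a • θ' + (1 - a) • θ := by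
    intro a; funext k; simp [hv, Pi.sub_apply]; ring
  have hderiv0 : HasDerivAt (fun a : ℝ => f (θ + a • v)) (L v) 0 := by
    have h1 : HasDerivAt (fun a : ℝ => θ + a • v) v 0 := by
      simpa using ((hasDerivAt_id (0:ℝ)).smul_const v).const_add θ
    have h2 : HasFDerivAt f L (θ + (0:ℝ) • v) := by simpa using hd
    exact h2.comp_hasDerivAt 0 h1
  have hLv : L v = ∑ k, (θ' k - θ k) * g θ k := by
    simp only [L, ContinuousLinearMap.sum_apply, ContinuousLinearMap.smul_apply,
      ContinuousLinearMap.proj_apply, smul_eq_mul]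
    exact Finset.sum_congr rfl fun k _ => by simp [hv, Pi.sub_apply]; ring
  have hslope : Filter.Tendsto (slope (fun a : ℝ => f (θ + a • v)) 0) (nhdsWithin 0 (Set.Ioi 0))
      (nhds (L v)) :=
    ((hasDerivAt_iff_tendsto_slope.mp hderiv0)).mono_left
      (nhdsWithin_mono _ (fun a ha => ne_of_gt ha))
  have hev : ∀ᶠ a in nhdsWithin (0:ℝ) (Set.Ioi 0),
      f θ' - f θ ≤ slope (fun a : ℝ => f (θ + a • v)) 0 a := by
    filter_upwards [Ioc_mem_nhdsGT_of_mem (Set.left_mem_Ico.2 one_pos)] with a ha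
    have ha0 : 0 < a := ha.1
    have hcc : a • f θ' + (1-a) • f θ ≤ f (a • θ' + (1-a) • θ) :=
      hconc.2 hθ' hθ ha0.le (by linarith [ha.2]) (by ring)
    rw [← hline a] at hcc
    have key : a * (f θ' - f θ) ≤ f (θ + a • v) - f θ := by
      have he : a • f θ' + (1 - a) • f θ = a * (f θ' - f θ) + f θ := by
        simp only [smul_eq_mul]; ring
      linarith [he ▸ hcc]
    rw [slope_def_field]
    simp only [zero_smul, add_zero, sub_zero]
    rw [le_div_iff₀ ha0]
    linarith [key]
  have := ge_of_tendsto hslope hev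
  rw [hLv] at this; linarith [this]



/-- Theorem 1 (Clarkson): let `f` be continuously differentiable and concave on the
unit simplex `Δ_K`, with gradient `g` (hypotheses `hderiv`, `hcont`) and curvature
constant `C` (hypothesis `hcurv`: for all `θ, θ' ∈ Δ_K` and `a ∈ [0,1]`,
`f(aθ' + (1−a)θ) ≥ f(θ) + a⟨θ'−θ, ∇f(θ)⟩ − a²C`). Let `θseq` be the Frank–Wolfe
iterates for `f` (hypotheses `hinit`, `hstep`). Then for every `ℓ ≥ 0` the iterate
`θ_ℓ` has at most `ℓ+1` nonzero coordinates and satisfies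
`max_{θ' ∈ Δ_K} f(θ') − f(θ_ℓ) ≤ 4C/(ℓ+3)`. -/
theorem frank_wolfe_convergence (K : ℕ)
    (f : (Fin K → ℝ) → ℝ) (g : (Fin K → ℝ) → Fin K → ℝ) (C : ℝ)
    (hconc : ConcaveOn ℝ (stdSimplex ℝ (Fin K)) f)
    (hderiv : ∀ θ ∈ stdSimplex ℝ (Fin K),
      HasFDerivAt f
        (∑ i, g θ i • (ContinuousLinearMap.proj i : (Fin K → ℝ) →L[ℝ] ℝ)) θ)
    (hcont : ContinuousOn g (stdSimplex ℝ (Fin K)))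
    (hcurv : ∀ θ ∈ stdSimplex ℝ (Fin K), ∀ θ' ∈ stdSimplex ℝ (Fin K),
      ∀ a ∈ Set.Icc (0 : ℝ) 1,
        f θ + a * (∑ k, (θ' k - θ k) * g θ k) - a ^ 2 * C
          ≤ f (a • θ' + (1 - a) • θ))
    (θseq : ℕ → Fin K → ℝ)
    (hinit : ∃ i₀ : Fin K, (∀ i, f (Pi.single i 1) ≤ f (Pi.single i₀ 1)) ∧
      θseq 0 = (Pi.single i₀ 1 : Fin K → ℝ))
    (hstep : ∀ ℓ : ℕ, ∃ i' : Fin K, (∀ i, g (θseq ℓ) i ≤ g (θseq ℓ) i') ∧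
      θseq (ℓ + 1) = (2 / ((ℓ : ℝ) + 3)) • (Pi.single i' 1 : Fin K → ℝ)
        + (1 - 2 / ((ℓ : ℝ) + 3)) • θseq ℓ) :
    ∀ ℓ : ℕ,
      (Finset.univ.filter fun k => θseq ℓ k ≠ 0).card ≤ ℓ + 1 ∧
      ∀ θ' ∈ stdSimplex ℝ (Fin K), f θ' - f (θseq ℓ) ≤ 4 * C / ((ℓ : ℝ) + 3) := by
  obtain ⟨i₀, hi₀max, hθ0⟩ := hinit
  -- the step size is in [0,1]
  have hα : ∀ ℓ : ℕ, 2 / ((ℓ : ℝ) + 3) ∈ Set.Icc (0:ℝ) 1 := by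
    intro ℓ
    have h3 : (0:ℝ) < (ℓ:ℝ) + 3 := by positivity
    constructor
    · positivity
    · rw [div_le_one h3]; have : (0:ℝ) ≤ (ℓ:ℝ) := Nat.cast_nonneg ℓ; linarith
  -- all iterates are in the simplex
  have hmem : ∀ ℓ, θseq ℓ ∈ stdSimplex ℝ (Fin K) := by
    intro ℓ
    induction ℓ with
    | zero => rw [hθ0]; exact single_mem_stdSimplex ℝ i₀
    | succ n ih =>
      obtain ⟨i', _, hrec⟩ := hstep n
      rw [hrec]
      have hα' := hα n
      exact (convex_stdSimplex ℝ (Fin K)) (single_mem_stdSimplex ℝ i') ih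
        hα'.1 (by linarith [hα'.2]) (by ring)
  -- C is nonnegative
  have hC : 0 ≤ C := by
    have := hcurv (θseq 0) (hmem 0) (θseq 0) (hmem 0) 1 ⟨zero_le_one, le_refl 1⟩
    simp at this
    linarith
  intro ℓ
  induction ℓ with
  | zero =>
    constructor
    · -- support of Pi.single i₀ 1 has card ≤ 1
      have : (Finset.univ.filter fun k => θseq 0 k ≠ 0) ⊆ {i₀} := by
        intro k hk
        simp only [Finset.mem_filter, hθ0] at hk
        simp only [Finset.mem_singleton]
        by_contra hne
        exact hk.2 (Pi.single_eq_of_ne hne 1)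
      calc (Finset.univ.filter fun k => θseq 0 k ≠ 0).card ≤ ({i₀} : Finset (Fin K)).card :=
            Finset.card_le_card this
        _ = 1 := Finset.card_singleton i₀
    · intro θ' hθ'
      -- gradient inequality at θ0
      have hgi := fw_grad_ineq f g hconc (hmem 0) hθ' (hderiv _ (hmem 0))
      -- let i* maximize g (θseq 0)
      obtain ⟨istar, histar⟩ := Finset.exists_max_image Finset.univ (g (θseq 0))
        ⟨i₀, Finset.mem_univ i₀⟩
      -- ⟨θ' - θ0, g⟩ ≤ ⟨e_istar - θ0, g⟩
      have hsum : ∑ k, (θ' k - θseq 0 k) * g (θseq 0) k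
          ≤ ∑ k, ((Pi.single istar 1 : Fin K → ℝ) k - θseq 0 k) * g (θseq 0) k := by
        have h1 : ∑ k, θ' k * g (θseq 0) k ≤ g (θseq 0) istar := by
          calc ∑ k, θ' k * g (θseq 0) k ≤ ∑ k, θ' k * g (θseq 0) istar :=
                Finset.sum_le_sum fun k _ =>
                  mul_le_mul_of_nonneg_left (histar.2 k (Finset.mem_univ k)) (hθ'.1 k)
            _ = g (θseq 0) istar := by rw [← Finset.sum_mul, hθ'.2, one_mul]
        have h2 : ∑ k, (Pi.single istar 1 : Fin K → ℝ) k * g (θseq 0) k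
            = g (θseq 0) istar := by
          rw [Finset.sum_eq_single istar]
          · simp
          · intro b _ hb; simp [Pi.single_eq_of_ne hb]
          · intro h; exact absurd (Finset.mem_univ istar) h
        simp only [sub_mul]
        rw [Finset.sum_sub_distrib, Finset.sum_sub_distrib]
        linarith [h1, h2.ge]
      -- hcurv at θ0 toward e_istar with a = 1, and f(e_istar) ≤ f(θ0)
      have hc := hcurv (θseq 0) (hmem 0) (Pi.single istar 1) (single_mem_stdSimplex ℝ istar)
        1 ⟨zero_le_one, le_refl 1⟩
      simp only [one_smul, sub_self, zero_smul, add_zero] at hc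
      have hbest : f (Pi.single istar 1) ≤ f (θseq 0) := by rw [hθ0]; exact hi₀max istar
      have : ∑ k, ((Pi.single istar 1 : Fin K → ℝ) k - θseq 0 k) * g (θseq 0) k ≤ C := by
        nlinarith [hc, hbest]
      have hfinal : f θ' - f (θseq 0) ≤ C := by linarith [hgi, hsum, this]
      have : C ≤ 4 * C / ((0:ℕ) + 3 : ℝ) := by
        push_cast; rw [le_div_iff₀ (by norm_num : (0:ℝ) < 0 + 3)]; linarith
      linarith
  | succ n ih =>
    obtain ⟨i', hi'max, hrec⟩ := hstep n
    set α := 2 / ((n : ℝ) + 3) with hαdef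
    have hαn := hα n
    constructor
    · -- support grows by at most one
      have hsub : (Finset.univ.filter fun k => θseq (n+1) k ≠ 0)
          ⊆ insert i' (Finset.univ.filter fun k => θseq n k ≠ 0) := by
        intro k hk
        simp only [Finset.mem_filter, Finset.mem_univ, true_and] at hk
        rw [Finset.mem_insert]
        by_cases hki : k = i'
        · exact Or.inl hki
        · right
          simp only [Finset.mem_filter, Finset.mem_univ, true_and]
          intro hz
          apply hk
          rw [hrec]
          simp [Pi.single_eq_of_ne hki, hz]
      calc (Finset.univ.filter fun k => θseq (n+1) k ≠ 0).card
          ≤ (insert i' (Finset.univ.filter fun k => θseq n k ≠ 0)).card :=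
            Finset.card_le_card hsub
        _ ≤ (Finset.univ.filter fun k => θseq n k ≠ 0).card + 1 :=
            Finset.card_insert_le _ _
        _ ≤ (n + 1) + 1 := Nat.add_le_add_right ih.1 1
    · intro θ' hθ'
      have hgi := fw_grad_ineq f g hconc (hmem n) hθ' (hderiv _ (hmem n))
      -- ⟨θ', g⟩ ≤ g i'
      have h1 : ∑ k, θ' k * g (θseq n) k ≤ g (θseq n) i' := by
        calc ∑ k, θ' k * g (θseq n) k ≤ ∑ k, θ' k * g (θseq n) i' :=
              Finset.sum_le_sum fun k _ =>
                mul_le_mul_of_nonneg_left (hi'max k) (hθ'.1 k)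
          _ = g (θseq n) i' := by rw [← Finset.sum_mul, hθ'.2, one_mul]
      have h2 : ∑ k, (Pi.single i' 1 : Fin K → ℝ) k * g (θseq n) k = g (θseq n) i' := by
        rw [Finset.sum_eq_single i']
        · simp
        · intro b _ hb; simp [Pi.single_eq_of_ne hb]
        · intro h; exact absurd (Finset.mem_univ i') h
      have hsum : ∑ k, (θ' k - θseq n k) * g (θseq n) k
          ≤ ∑ k, ((Pi.single i' 1 : Fin K → ℝ) k - θseq n k) * g (θseq n) k := by
        simp only [sub_mul]
        rw [Finset.sum_sub_distrib, Finset.sum_sub_distrib]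
        linarith [h1, h2.ge]
      -- curvature bound for the step
      have hc := hcurv (θseq n) (hmem n) (Pi.single i' 1) (single_mem_stdSimplex ℝ i')
        α hαn
      rw [← hrec] at hc
      -- combine
      have hαpos : 0 ≤ α := hαn.1
      have hrecineq : f θ' - f (θseq (n+1))
          ≤ (1 - α) * (f θ' - f (θseq n)) + α^2 * C := by
        nlinarith [hc, hgi, hsum, mul_le_mul_of_nonneg_left (le_trans hgi hsum) hαpos]
      have hih := ih.2 θ' hθ'
      have hx : (0:ℝ) ≤ (n:ℝ) := Nat.cast_nonneg n
      have h3 : (0:ℝ) < (n:ℝ) + 3 := by linarith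
      have h4 : (0:ℝ) < (n:ℝ) + 4 := by linarith
      have h1α : 0 ≤ 1 - α := by linarith [hαn.2]
      have step2 : (1 - α) * (f θ' - f (θseq n)) + α^2 * C
          ≤ (1 - α) * (4 * C / ((n:ℝ) + 3)) + α^2 * C := by
        nlinarith [mul_le_mul_of_nonneg_left hih h1α]
      have step3 : (1 - α) * (4 * C / ((n:ℝ) + 3)) + α^2 * C ≤ 4 * C / ((n:ℝ) + 4) := by
        rw [hαdef]
        have key : (1 - 2/((n:ℝ)+3)) * (4*C/((n:ℝ)+3)) + (2/((n:ℝ)+3))^2 * C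
            = 4*C*((n:ℝ)+2)/((n:ℝ)+3)^2 := by field_simp; ring
        rw [key, div_le_div_iff₀ (by positivity) h4]
        nlinarith [hC, hx]
      have : ((n:ℝ) + 1) + 3 = (n:ℝ) + 4 := by ring
      push_cast
      rw [this]
      linarith [hrecineq, step2, step3]
end

section
/- Let f : ℝ^K → ℝ be differentiable on the unit simplex Δ_K and let (θ_ℓ) be the Frank–Wolfe iterates for f. Then every iterate θ_ℓ lies in Δ_K, and the support of θ_ℓ (the set of indices k with (θ_ℓ)_k ≠ 0) has cardinality at most ℓ+1. -/
/-- Every Frank–Wolfe iterate lies in the unit simplex `Δ_K`, and the iterate `θ_ℓ`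
has support of cardinality at most `ℓ + 1`. Here `g θ` denotes the gradient `∇f(θ)`
(hypothesis `hderiv`), the initial iterate is a vertex `e_{i₀}` maximizing `f` over
the vertices of `Δ_K` (hypothesis `hinit`), and each step moves toward a vertex of
largest partial derivative with step size `2/(ℓ+3)` (hypothesis `hstep`). -/
theorem frank_wolfe_iterates_mem_simplex_and_sparse (K : ℕ)
    (f : (Fin K → ℝ) → ℝ) (g : (Fin K → ℝ) → Fin K → ℝ)
    (hderiv : ∀ θ ∈ stdSimplex ℝ (Fin K),
      HasFDerivAt f
        (∑ i, g θ i • (ContinuousLinearMap.proj i : (Fin K → ℝ) →L[ℝ] ℝ)) θ)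
    (θseq : ℕ → Fin K → ℝ)
    (hinit : ∃ i₀ : Fin K, (∀ i, f (Pi.single i 1) ≤ f (Pi.single i₀ 1)) ∧
      θseq 0 = (Pi.single i₀ 1 : Fin K → ℝ))
    (hstep : ∀ ℓ : ℕ, ∃ i' : Fin K, (∀ i, g (θseq ℓ) i ≤ g (θseq ℓ) i') ∧
      θseq (ℓ + 1) = (2 / ((ℓ : ℝ) + 3)) • (Pi.single i' 1 : Fin K → ℝ)
        + (1 - 2 / ((ℓ : ℝ) + 3)) • θseq ℓ) :
    ∀ ℓ : ℕ, θseq ℓ ∈ stdSimplex ℝ (Fin K) ∧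
      (Finset.univ.filter fun k => θseq ℓ k ≠ 0).card ≤ ℓ + 1 := by

  have hsingle : ∀ i : Fin K, (Pi.single i 1 : Fin K → ℝ) ∈ stdSimplex ℝ (Fin K) := by
    intro i
    constructor
    · intro x
      classical
      rcases eq_or_ne x i with h | h
      · subst h; simp
      · simp [Pi.single_eq_of_ne h]
    · simp
  intro ℓ
  induction ℓ with
  | zero =>
    obtain ⟨i₀, _, h0⟩ := hinit
    constructor
    · rw [h0]; exact hsingle i₀
    · rw [h0]
      have : (Finset.univ.filter fun k => (Pi.single i₀ 1 : Fin K → ℝ) k ≠ 0) ⊆ {i₀} := by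
        intro k hk
        simp only [Finset.mem_filter] at hk
        by_contra hne
        simp only [Finset.mem_singleton] at hne
        exact hk.2 (Pi.single_eq_of_ne hne 1)
      calc _ ≤ ({i₀} : Finset (Fin K)).card := Finset.card_le_card this
        _ = 1 := Finset.card_singleton i₀
  | succ n ih =>
    obtain ⟨i', _, hs⟩ := hstep n
    have hα0 : (0:ℝ) ≤ 2 / ((n : ℝ) + 3) := by positivity
    have hα1 : 2 / ((n : ℝ) + 3) ≤ 1 := by
      rw [div_le_one (by positivity)]
      linarith [Nat.cast_nonneg (α := ℝ) n]
    constructor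
    · rw [hs]
      exact (convex_stdSimplex ℝ (Fin K)) (hsingle i') ih.1 hα0 (by linarith)
        (by ring)
    · have hsub : (Finset.univ.filter fun k => θseq (n+1) k ≠ 0) ⊆
          insert i' (Finset.univ.filter fun k => θseq n k ≠ 0) := by
        intro k hk
        simp only [Finset.mem_filter] at hk
        simp only [Finset.mem_insert, Finset.mem_filter, Finset.mem_univ, true_and]
        by_contra hc
        push_neg at hc
        apply hk.2
        rw [hs]
        simp [Pi.single_eq_of_ne hc.1, hc.2]
      calc _ ≤ _ := Finset.card_le_card hsub
        _ ≤ (Finset.univ.filter fun k => θseq n k ≠ 0).card + 1 :=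
          Finset.card_insert_le _ _
        _ ≤ (n + 1) + 1 := by omega
end

section
/- Let f : ℝ^K → ℝ be differentiable and concave on the unit simplex Δ_K with curvature constant C_f, let f* = max_{θ' ∈ Δ_K} f(θ'), and let θ ∈ Δ_K. For any i' ∈ argmax_i (∇f(θ))_i and any a ∈ [0,1], the point θ_+ = a·e_{i'} + (1−a)·θ lies in Δ_K and satisfies f* − f(θ_+) ≤ (1−a)·(f* − f(θ)) + a²·C_f. -/
/-- One-step progress of Frank–Wolfe: let `f` be differentiable and concave on the
unit simplex `Δ_K` with gradient `g` and curvature constant `C`, let `fstar` be the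
maximum of `f` over `Δ_K`, and let `θ ∈ Δ_K`. For any `i'` maximizing the partial
derivatives `(∇f(θ))_i` and any `a ∈ [0,1]`, the point
`θ₊ = a • e_{i'} + (1−a) • θ` lies in `Δ_K` and satisfies
`fstar − f(θ₊) ≤ (1−a)(fstar − f(θ)) + a²C`. -/
theorem frank_wolfe_one_step (K : ℕ)
    (f : (Fin K → ℝ) → ℝ) (g : (Fin K → ℝ) → Fin K → ℝ) (C : ℝ)
    (hconc : ConcaveOn ℝ (stdSimplex ℝ (Fin K)) f)
    (hderiv : ∀ θ ∈ stdSimplex ℝ (Fin K),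
      HasFDerivAt f
        (∑ i, g θ i • (ContinuousLinearMap.proj i : (Fin K → ℝ) →L[ℝ] ℝ)) θ)
    (hcurv : ∀ θ ∈ stdSimplex ℝ (Fin K), ∀ θ' ∈ stdSimplex ℝ (Fin K),
      ∀ a ∈ Set.Icc (0 : ℝ) 1,
        f θ + a * (∑ k, (θ' k - θ k) * g θ k) - a ^ 2 * C
          ≤ f (a • θ' + (1 - a) • θ))
    (fstar : ℝ) (hfstar : IsGreatest (f '' stdSimplex ℝ (Fin K)) fstar)
    (θ : Fin K → ℝ) (hθ : θ ∈ stdSimplex ℝ (Fin K))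
    (i' : Fin K) (hi' : ∀ i, g θ i ≤ g θ i')
    (a : ℝ) (ha : a ∈ Set.Icc (0 : ℝ) 1) :
    a • (Pi.single i' 1 : Fin K → ℝ) + (1 - a) • θ ∈ stdSimplex ℝ (Fin K) ∧
    fstar - f (a • (Pi.single i' 1 : Fin K → ℝ) + (1 - a) • θ)
      ≤ (1 - a) * (fstar - f θ) + a ^ 2 * C := by
  obtain ⟨ha0, ha1⟩ := ha
  have hsingle : (Pi.single i' 1 : Fin K → ℝ) ∈ stdSimplex ℝ (Fin K) :=
    single_mem_stdSimplex ℝ i'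
  have hmem : a • (Pi.single i' 1 : Fin K → ℝ) + (1 - a) • θ ∈ stdSimplex ℝ (Fin K) :=
    (convex_stdSimplex ℝ (Fin K)) hsingle hθ ha0 (by linarith) (by ring)
  refine ⟨hmem, ?_⟩
  obtain ⟨θs, hθs, hfθs⟩ := hfstar.1
  -- gradient inequality: fstar - f θ ≤ ⟨∇f(θ), θs - θ⟩
  set D := (∑ i, g θ i • (ContinuousLinearMap.proj i : (Fin K → ℝ) →L[ℝ] ℝ)) with hD
  have hd := hderiv θ hθ
  have hcomb : ∀ b : ℝ, θ + b • (θs - θ) = b • θs + (1 - b) • θ := by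
    intro b; funext k
    simp only [Pi.add_apply, Pi.smul_apply, Pi.sub_apply, smul_eq_mul]
    ring
  have hc0 : θ + (0 : ℝ) • (θs - θ) = θ := by simp
  have hline : HasDerivAt (fun b : ℝ => f (θ + b • (θs - θ))) (D (θs - θ)) 0 := by
    have h1 : HasDerivAt (fun b : ℝ => θ + b • (θs - θ)) (θs - θ) 0 := by
      simpa using ((hasDerivAt_id (0 : ℝ)).smul_const (θs - θ)).const_add θ
    have hd' : HasFDerivAt f D (θ + (0 : ℝ) • (θs - θ)) := by rwa [hc0]
    exact hd'.comp_hasDerivAt 0 h1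
  have htend : Filter.Tendsto (slope (fun b : ℝ => f (θ + b • (θs - θ))) 0)
      (nhdsWithin 0 (Set.Ioi 0)) (nhds (D (θs - θ))) :=
    (hasDerivAt_iff_tendsto_slope.mp hline).mono_left
      (nhdsWithin_mono 0 (fun x hx => ne_of_gt hx))
  have hgrad : fstar - f θ ≤ D (θs - θ) := by
    refine ge_of_tendsto htend ?_
    filter_upwards [Ioo_mem_nhdsGT_of_mem (Set.mem_Ico.mpr ⟨le_refl (0:ℝ), one_pos⟩)]
      with b hb
    obtain ⟨hb0, hb1⟩ := hb
    have hcv := hconc.2 hθs hθ (show (0:ℝ) ≤ b from le_of_lt hb0) (show (0:ℝ) ≤ 1 - b by linarith) (by ring)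
    rw [slope_def_field]
    have hfb : f (θ + b • (θs - θ)) = f (b • θs + (1 - b) • θ) := by rw [hcomb]
    rw [sub_zero, le_div_iff₀ hb0, hc0, hfb]
    have : b • fstar + (1 - b) • f θ ≤ f (b • θs + (1 - b) • θ) := by rwa [← hfθs]
    simp only [smul_eq_mul] at this
    nlinarith
  have hDapp : D (θs - θ) = ∑ k, (θs k - θ k) * g θ k := by
    rw [hD]
    simp [ContinuousLinearMap.sum_apply, ContinuousLinearMap.smul_apply,
      ContinuousLinearMap.proj_apply, smul_eq_mul, mul_comm]
  have hsum1 : ∑ k, (Pi.single i' 1 : Fin K → ℝ) k * g θ k = g θ i' := by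
    simp [Pi.single_apply, ite_mul]
  have hθs_le : ∑ k, θs k * g θ k ≤ g θ i' := by
    calc ∑ k, θs k * g θ k ≤ ∑ k, θs k * g θ i' :=
          Finset.sum_le_sum fun k _ => mul_le_mul_of_nonneg_left (hi' k) (hθs.1 k)
      _ = (∑ k, θs k) * g θ i' := by rw [Finset.sum_mul]
      _ = g θ i' := by rw [hθs.2, one_mul]
  have hstep : fstar - f θ ≤ ∑ k, ((Pi.single i' 1 : Fin K → ℝ) k - θ k) * g θ k := by
    have h1 : ∑ k, (θs k - θ k) * g θ k ≤ ∑ k, ((Pi.single i' 1 : Fin K → ℝ) k - θ k) * g θ k := by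
      simp only [sub_mul, Finset.sum_sub_distrib]
      have : ∑ k, θs k * g θ k ≤ ∑ k, (Pi.single i' 1 : Fin K → ℝ) k * g θ k := by
        rw [hsum1]; exact hθs_le
      linarith
    calc fstar - f θ ≤ D (θs - θ) := hgrad
      _ = ∑ k, (θs k - θ k) * g θ k := hDapp
      _ ≤ _ := h1
  have hcv := hcurv θ hθ (Pi.single i' 1) hsingle a ⟨ha0, ha1⟩
  have haS : a * (fstar - f θ) ≤ a * ∑ k, ((Pi.single i' 1 : Fin K → ℝ) k - θ k) * g θ k :=
    mul_le_mul_of_nonneg_left hstep ha0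
  nlinarith
end

section
/- Let C ≥ 0 and let (h_ℓ)_{ℓ ≥ 0} be a sequence of nonnegative real numbers such that h_0 ≤ 4C/3 and, for every ℓ ≥ 0, h_{ℓ+1} ≤ (1 − 2/(ℓ+3))·h_ℓ + (2/(ℓ+3))²·C. Then h_ℓ ≤ 4C/(ℓ+3) for every ℓ ≥ 0. -/
/-- Induction lemma establishing the `O(1/ℓ)` convergence rate of the Frank–Wolfe
algorithm with step sizes `α_ℓ = 2/(ℓ+3)`: if the optimality gaps `h ℓ` are
nonnegative, `h 0 ≤ 4C/3`, and `h (ℓ+1) ≤ (1 - 2/(ℓ+3)) * h ℓ + (2/(ℓ+3))^2 * C`,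
then `h ℓ ≤ 4C/(ℓ+3)` for every `ℓ`. -/
theorem frank_wolfe_rate_induction (C : ℝ) (hC : 0 ≤ C) (h : ℕ → ℝ)
    (hnonneg : ∀ ℓ : ℕ, 0 ≤ h ℓ)
    (h0 : h 0 ≤ 4 * C / 3)
    (hrec : ∀ ℓ : ℕ, h (ℓ + 1) ≤ (1 - 2 / ((ℓ : ℝ) + 3)) * h ℓ + (2 / ((ℓ : ℝ) + 3)) ^ 2 * C) :
    ∀ ℓ : ℕ, h ℓ ≤ 4 * C / ((ℓ : ℝ) + 3) := by
  intro ℓ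
  induction ℓ with
  | zero => simpa using h0
  | succ n ih =>
    have hn : (0 : ℝ) < (n : ℝ) + 3 := by positivity
    have hfac : (0 : ℝ) ≤ 1 - 2 / ((n : ℝ) + 3) := by
      rw [sub_nonneg, div_le_one hn]; linarith
    have key : h (n + 1) ≤ (1 - 2 / ((n : ℝ) + 3)) * (4 * C / ((n : ℝ) + 3))
        + (2 / ((n : ℝ) + 3)) ^ 2 * C := by
      calc h (n + 1) ≤ (1 - 2 / ((n : ℝ) + 3)) * h n + (2 / ((n : ℝ) + 3)) ^ 2 * C := hrec n
        _ ≤ _ := by gcongr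
    refine key.trans ?_
    push_cast
    have h1 : (1 - 2 / ((n : ℝ) + 3)) * (4 * C / ((n : ℝ) + 3)) + (2 / ((n : ℝ) + 3)) ^ 2 * C
        = 4 * C * ((n : ℝ) + 2) / ((n : ℝ) + 3) ^ 2 := by
      field_simp; ring
    rw [h1, div_le_div_iff₀ (by positivity) (by positivity)]
    nlinarith [mul_nonneg hC hn.le]
end

section
/- Let f : ℝ^K → ℝ be continuously differentiable and concave on the unit simplex Δ_K with curvature constant C_f, let f* = max_{θ ∈ Δ_K} f(θ), and let (θ_ℓ) be the Frank–Wolfe iterates for f with optimality gaps h_ℓ = f* − f(θ_ℓ). Then for every ℓ ≥ 0, h_{ℓ+1} ≤ (1 − 2/(ℓ+3))·h_ℓ + (2/(ℓ+3))²·C_f. -/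
lemma grad_ineq (K : ℕ) (f : (Fin K → ℝ) → ℝ) (g : (Fin K → ℝ) → Fin K → ℝ)
    (hconc : ConcaveOn ℝ (stdSimplex ℝ (Fin K)) f)
    (x y : Fin K → ℝ) (hx : x ∈ stdSimplex ℝ (Fin K)) (hy : y ∈ stdSimplex ℝ (Fin K))
    (hd : HasFDerivAt f
        (∑ i, g x i • (ContinuousLinearMap.proj i : (Fin K → ℝ) →L[ℝ] ℝ)) x) :
    f y - f x ≤ ∑ k, (y k - x k) * g x k := by
  set d : Fin K → ℝ := y - x with hdd
  have hline : HasDerivAt (fun a : ℝ => x + a • d) d 0 := by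
    simpa using ((hasDerivAt_id (0:ℝ)).smul_const d).const_add x
  have hd' : HasFDerivAt f
      (∑ i, g x i • (ContinuousLinearMap.proj i : (Fin K → ℝ) →L[ℝ] ℝ))
      ((fun a : ℝ => x + a • d) 0) := by simpa using hd
  have hcomp : HasDerivAt (fun a : ℝ => f (x + a • d))
      ((∑ i, g x i • (ContinuousLinearMap.proj i : (Fin K → ℝ) →L[ℝ] ℝ)) d) 0 :=
    hd'.comp_hasDerivAt 0 hline
  have hval : ((∑ i, g x i • (ContinuousLinearMap.proj i : (Fin K → ℝ) →L[ℝ] ℝ)) d)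
      = ∑ k, (y k - x k) * g x k := by
    simp [ContinuousLinearMap.sum_apply, hdd, mul_comm, Pi.sub_apply]
  have hsub : Set.Ioi (0:ℝ) ⊆ {(0:ℝ)}ᶜ := fun a ha => ne_of_gt ha
  have htend := (hasDerivAt_iff_tendsto_slope.mp hcomp).mono_left
    (nhdsWithin_mono 0 hsub)
  have hev : ∀ᶠ a in nhdsWithin (0:ℝ) (Set.Ioi 0),
      f y - f x ≤ slope (fun a : ℝ => f (x + a • d)) 0 a := by
    filter_upwards [Ioo_mem_nhdsGT_of_mem (by norm_num : (0:ℝ) ∈ Set.Ico (0:ℝ) 1)]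
      with a ha
    have ha0 : (0:ℝ) < a := ha.1
    have hcc := hconc.2 hy hx (le_of_lt ha0) (by linarith [ha.2] : (0:ℝ) ≤ 1 - a)
      (by ring)
    have heq : x + a • d = a • y + (1 - a) • x := by
      funext k; simp [hdd, Pi.sub_apply]; ring
    have hkey : f x + a * (f y - f x) ≤ f (x + a • d) := by
      rw [heq]
      have h2 : a • f y + (1 - a) • f x = f x + a * (f y - f x) := by
        simp only [smul_eq_mul]; ring
      linarith [hcc]
    rw [slope_def_field, sub_zero, le_div_iff₀ ha0]
    simp only [zero_smul, add_zero]
    linarith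
  have := ge_of_tendsto htend hev
  rw [hval] at this
  exact this

/-- Recursive bound on the optimality gaps of the Frank–Wolfe iterates: let `f` be
continuously differentiable and concave on the unit simplex `Δ_K` with gradient `g`
(hypotheses `hderiv`, `hcont`) and curvature constant `C` (hypothesis `hcurv`), let
`fstar = max_{θ ∈ Δ_K} f(θ)`, and let `θseq` be the Frank–Wolfe iterates for `f`
(hypotheses `hinit`, `hstep`) with optimality gaps `h_ℓ = fstar − f(θ_ℓ)`. Then for
every `ℓ ≥ 0`, `h_{ℓ+1} ≤ (1 − 2/(ℓ+3)) h_ℓ + (2/(ℓ+3))² C`. -/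
theorem frank_wolfe_gap_recursion (K : ℕ)
    (f : (Fin K → ℝ) → ℝ) (g : (Fin K → ℝ) → Fin K → ℝ) (C : ℝ)
    (hconc : ConcaveOn ℝ (stdSimplex ℝ (Fin K)) f)
    (hderiv : ∀ θ ∈ stdSimplex ℝ (Fin K),
      HasFDerivAt f
        (∑ i, g θ i • (ContinuousLinearMap.proj i : (Fin K → ℝ) →L[ℝ] ℝ)) θ)
    (hcont : ContinuousOn g (stdSimplex ℝ (Fin K)))
    (hcurv : ∀ θ ∈ stdSimplex ℝ (Fin K), ∀ θ' ∈ stdSimplex ℝ (Fin K),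
      ∀ a ∈ Set.Icc (0 : ℝ) 1,
        f θ + a * (∑ k, (θ' k - θ k) * g θ k) - a ^ 2 * C
          ≤ f (a • θ' + (1 - a) • θ))
    (fstar : ℝ) (hfstar : IsGreatest (f '' stdSimplex ℝ (Fin K)) fstar)
    (θseq : ℕ → Fin K → ℝ)
    (hinit : ∃ i₀ : Fin K, (∀ i, f (Pi.single i 1) ≤ f (Pi.single i₀ 1)) ∧
      θseq 0 = (Pi.single i₀ 1 : Fin K → ℝ))
    (hstep : ∀ ℓ : ℕ, ∃ i' : Fin K, (∀ i, g (θseq ℓ) i ≤ g (θseq ℓ) i') ∧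
      θseq (ℓ + 1) = (2 / ((ℓ : ℝ) + 3)) • (Pi.single i' 1 : Fin K → ℝ)
        + (1 - 2 / ((ℓ : ℝ) + 3)) • θseq ℓ) :
    ∀ ℓ : ℕ,
      fstar - f (θseq (ℓ + 1))
        ≤ (1 - 2 / ((ℓ : ℝ) + 3)) * (fstar - f (θseq ℓ))
          + (2 / ((ℓ : ℝ) + 3)) ^ 2 * C := by
  -- every iterate lies in the simplex
  have hmem : ∀ ℓ, θseq ℓ ∈ stdSimplex ℝ (Fin K) := by
    intro ℓ
    induction ℓ with
    | zero =>
      obtain ⟨i₀, -, h0⟩ := hinit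
      rw [h0]; exact single_mem_stdSimplex ℝ i₀
    | succ n ih =>
      obtain ⟨i', -, hs⟩ := hstep n
      have ha0 : (0:ℝ) ≤ 2 / ((n:ℝ) + 3) := by positivity
      have ha1 : 2 / ((n:ℝ) + 3) ≤ 1 := by
        rw [div_le_one (by positivity)]
        have : (0:ℝ) ≤ (n:ℝ) := Nat.cast_nonneg n
        linarith
      rw [hs]
      exact (convex_stdSimplex ℝ (Fin K)) (single_mem_stdSimplex ℝ i') ih
        ha0 (by linarith) (by ring)
  obtain ⟨θs, hθs, hfθs⟩ := hfstar.1
  intro ℓ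
  obtain ⟨i', hmax, hs⟩ := hstep ℓ
  set a : ℝ := 2 / ((ℓ:ℝ) + 3) with ha
  have ha0 : (0:ℝ) ≤ a := by positivity
  have ha1 : a ≤ 1 := by
    rw [ha, div_le_one (by positivity)]
    have : (0:ℝ) ≤ (ℓ:ℝ) := Nat.cast_nonneg ℓ
    linarith
  set θ := θseq ℓ with hθ
  have hθmem := hmem ℓ
  -- the linearized gain dominates the gap
  have hsum1 : ∑ k, ((Pi.single i' 1 : Fin K → ℝ) k - θ k) * g θ k
      = g θ i' - ∑ k, θ k * g θ k := by
    simp [sub_mul, Finset.sum_sub_distrib, Pi.single_apply, ite_mul,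
      Finset.sum_ite_eq']
  have hsum2 : ∑ k, θs k * g θ k ≤ g θ i' := by
    calc ∑ k, θs k * g θ k ≤ ∑ k, θs k * g θ i' := by
          apply Finset.sum_le_sum
          intro k _
          exact mul_le_mul_of_nonneg_left (hmax k) (hθs.1 k)
      _ = g θ i' := by rw [← Finset.sum_mul, hθs.2, one_mul]
  have hgrad := grad_ineq K f g hconc θ θs hθmem hθs (hderiv θ hθmem)
  have hsum3 : ∑ k, (θs k - θ k) * g θ k
      = (∑ k, θs k * g θ k) - ∑ k, θ k * g θ k := by
    rw [← Finset.sum_sub_distrib]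
    congr 1; funext k; ring
  have hgap : fstar - f θ ≤ ∑ k, ((Pi.single i' 1 : Fin K → ℝ) k - θ k) * g θ k := by
    rw [hsum1, ← hfθs]
    rw [hsum3] at hgrad
    linarith
  have hc := hcurv θ hθmem (Pi.single i' 1) (single_mem_stdSimplex ℝ i') a ⟨ha0, ha1⟩
  rw [← hs] at hc
  have hmul : a * (fstar - f θ) ≤ a * ∑ k, ((Pi.single i' 1 : Fin K → ℝ) k - θ k) * g θ k :=
    mul_le_mul_of_nonneg_left hgap ha0
  have : f θ + a * (fstar - f θ) - a ^ 2 * C ≤ f (θseq (ℓ + 1)) := by linarith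
  have hfin : fstar - f (θseq (ℓ + 1)) ≤ (1 - a) * (fstar - f θ) + a ^ 2 * C := by
    nlinarith [this]
  simpa [ha, hθ] using hfin
end
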